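/- Decidability of ℜ: there exists a computable function f : 𝓛 → Bool (with respect to an encoding of formulas of 𝓛 as natural numbers) such that for every formula φ, f φ = true if and only if ⊢_ℜ φ. -/

import Mathlib

/-- Formulas of the modal language 𝓛: propositional variables, ⊥, →, and ▷. -/
inductive Formula : Type
  | var : ℕ → Formula
  | bot : Formula
  | imp : Formula → Formula → Formula
  | tri : Formula → Formula → Formula
deriving DecidableEq

namespace Formula

/-- ¬φ := φ → ⊥ -/
def neg (φ : Formula) : Formula := imp φ bot
/-- ⊤ := ¬⊥ -/
def top : Formula := neg bot
/-- φ ∨ ψ := ¬φ → ψ -/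
def disj (φ ψ : Formula) : Formula := imp (neg φ) ψ
/-- φ ∧ ψ := ¬(φ → ¬ψ) -/
def conj (φ ψ : Formula) : Formula := neg (imp φ (neg ψ))

/-- `φ` is a substitution instance of a classical propositional tautology:
it evaluates to `true` under every boolean valuation of formulas that
respects `⊥` and `→` (variables and `▷`-formulas are treated as atoms). -/
def IsPropTaut (φ : Formula) : Prop :=
  ∀ v : Formula → Bool, v bot = false →
    (∀ a b, v (imp a b) = (!(v a) || v b)) → v φ = true

/-- Hilbert-style provability.  `Prv false` is the logic ℜ (axioms: classical
tautologies, A1, A2, A3; rules: Modus Ponens and monotonicity M);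
`Prv true` is the logic ℜ_d, which additionally has axiom A4. -/
inductive Prv : Bool → Formula → Prop
  | taut {d : Bool} {φ} : IsPropTaut φ → Prv d φ
  | a1 {d : Bool} (φ ψ χ) : Prv d (imp (tri φ ψ) (imp (tri χ ψ) (tri (disj φ χ) ψ)))
  | a2 {d : Bool} (φ) : Prv d (tri bot φ)
  | a3 {d : Bool} (φ) : Prv d (tri φ top)
  | a4 (φ ψ χ) : Prv true (imp (tri φ ψ) (imp (tri φ χ) (tri φ (conj ψ χ))))
  | mp {d : Bool} {φ ψ} : Prv d (imp φ ψ) → Prv d φ → Prv d ψ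
  | mono {d : Bool} {φ₁ φ₂ ψ₁ ψ₂} : Prv d (imp φ₁ φ₂) → Prv d (imp ψ₁ ψ₂) →
      Prv d (imp (tri φ₂ ψ₁) (tri φ₁ ψ₂))

/-- `Deriv d Δ φ`: φ is derivable from the hypotheses Δ together with all
theorems of the logic (`Prv d`) using only Modus Ponens. -/
inductive Deriv (d : Bool) (Δ : Set Formula) : Formula → Prop
  | hyp {φ} : φ ∈ Δ → Deriv d Δ φ
  | thm {φ} : Prv d φ → Deriv d Δ φ
  | mp {φ ψ} : Deriv d Δ (imp φ ψ) → Deriv d Δ φ → Deriv d Δ ψ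

/-- Conjunction of a list of formulas (empty conjunction is ⊤). -/
def conjList : List Formula → Formula
  | [] => top
  | φ :: l => conj φ (conjList l)

/-- ⋀Γ : conjunction of all formulas of a finite set Γ (⋀∅ = ⊤). -/
noncomputable def bigConj (Γ : Finset Formula) : Formula := conjList Γ.toList

/-- A set of formulas is consistent if ⊥ is not derivable from it. -/
def Consistent (d : Bool) (Δ : Set Formula) : Prop := ¬ Deriv d Δ bot

/-- The pair (u,v) is w-consistent: w ⊬ ⋀u ▷ ¬⋀v. -/
def WCons (d : Bool) (w : Set Formula) (u v : Finset Formula) : Prop :=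
  ¬ Deriv d w (tri (bigConj u) (neg (bigConj v)))

/-- The operation ∼: ∼(¬φ) = φ, and ∼φ = ¬φ if φ is not a negation. -/
def simNeg : Formula → Formula
  | imp φ bot => φ
  | φ => neg φ

/-- Φ is closed under subformulas. -/
def SubClosed (Φ : Finset Formula) : Prop :=
  (∀ a b, imp a b ∈ Φ → a ∈ Φ ∧ b ∈ Φ) ∧ (∀ a b, tri a b ∈ Φ → a ∈ Φ ∧ b ∈ Φ)

/-- Φ is closed under the operation ∼. -/
def SimClosed (Φ : Finset Formula) : Prop := ∀ φ ∈ Φ, simNeg φ ∈ Φ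

/-- w is a maximal consistent subset of Φ: w ⊆ Φ, w is consistent, and for
every φ ∈ Φ either φ ∈ w or ∼φ ∈ w. -/
def MaxCons (d : Bool) (Φ : Finset Formula) (w : Finset Formula) : Prop :=
  w ⊆ Φ ∧ Consistent d ↑w ∧ ∀ φ ∈ Φ, φ ∈ w ∨ simNeg φ ∈ w

/-- Kripke forcing: `rel w u v` means u →_w v, `val w p` means w ⊩ p. -/
def Forces {W : Type*} (rel : W → W → W → Prop) (val : W → ℕ → Prop) :
    W → Formula → Prop
  | w, var p => val w p
  | _, bot => False
  | w, imp a b => Forces rel val w a → Forces rel val w b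
  | w, tri a b => ∀ u v, rel w u v → Forces rel val u a →
      ∃ v', rel w u v' ∧ Forces rel val v' b

end Formula

/-- A Kripke model: a finite set of worlds, a ternary computability relation,
and a forcing relation between worlds and propositional variables. -/
structure KripkeModel where
  W : Type
  fin : Finite W
  rel : W → W → W → Prop
  val : W → ℕ → Prop

/-- A Kripke model is deterministic if for all worlds w, u there is at most
one v with u →_w v. -/
def KripkeModel.Deterministic (M : KripkeModel) : Prop :=
  ∀ w u v v', M.rel w u v → M.rel w u v' → v = v'

/-- Forcing in a Kripke model. -/
def KripkeModel.Forces (M : KripkeModel) : M.W → Formula → Prop :=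
  Formula.Forces M.rel M.val

/-- The standard enumeration of nondeterministic partial recursive functions:
ζ_w(u) = the set of possible outputs of machine (code) w on input u. -/
def zeta (w u : ℕ) : Set ℕ :=
  {v | ((Denumerable.ofNat Nat.Partrec.Code w).eval (Nat.pair u v)).Dom}

/-- The standard enumeration of deterministic partial recursive functions:
ξ_w(u) = the value of the partial recursive function with code w on input u. -/
def xi (w u : ℕ) : Part ℕ :=
  (Denumerable.ofNat Nat.Partrec.Code w).eval u

namespace Formula

/-- Set semantics for nondeterministic partial recursive functions
(existential reading of ▷). -/
def semN (val : ℕ → Set ℕ) : Formula → Set ℕ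
  | var p => val p
  | bot => ∅
  | imp a b => (Set.univ \ semN val a) ∪ semN val b
  | tri a b => {w | ∀ u ∈ semN val a, zeta w u ≠ ∅ → zeta w u ∩ semN val b ≠ ∅}

/-- Set semantics for deterministic partial recursive functions. -/
def semD (val : ℕ → Set ℕ) : Formula → Set ℕ
  | var p => val p
  | bot => ∅
  | imp a b => (Set.univ \ semD val a) ∪ semD val b
  | tri a b => {w | ∀ u ∈ semD val a, ∀ h : (xi w u).Dom, (xi w u).get h ∈ semD val b}

/-- Universal set semantics for nondeterministic partial recursive functions:
every terminating computation path from φ* ends in ψ*. -/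
def semU (val : ℕ → Set ℕ) : Formula → Set ℕ
  | var p => val p
  | bot => ∅
  | imp a b => (Set.univ \ semU val a) ∪ semU val b
  | tri a b => {w | ∀ u ∈ semU val a, zeta w u ⊆ semU val b}

/-- A canonical injective encoding of formulas as natural numbers. -/
def enc : Formula → ℕ
  | var n => 4 * n
  | bot => 1
  | imp a b => 4 * Nat.pair (enc a) (enc b) + 2
  | tri a b => 4 * Nat.pair (enc a) (enc b) + 3

end Formula


/-!
ℜ is sound for Kripke models with a ternary relation, and complete for finite ones. If `⊬ φ`,
let `Φ` be the closure of `φ` under subformulas and `∼`, and let the atoms be the maximal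
consistent subsets of `Φ`. Taking as worlds the pairs `(s, T)` of an atom `s` and a set `T` of
atoms, with `u →_x v` when `x` does not prove `⋀u ▷ ¬⋁T_u` and `v`'s atom lies in `T_u`, gives a
countermodel of size at most `2 ^ 2 ^ (2 * enc φ + 5)`. So `φ` is a theorem iff it is forced in
every model of at most that size. Coding such a model and a truth table for all codes
`≤ enc φ` by numbers turns this into a bounded-quantifier, hence primitive recursive,
condition on `enc φ`.
-/

theorem Nat.exists_lt_two_pow_testBit_eq (g : ℕ → Bool) (m : ℕ) :
    ∃ x < 2 ^ m, ∀ i < m, x.testBit i = g i := by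
  induction m with
  | zero => exact ⟨0, by simp⟩
  | succ m ih =>
    obtain ⟨x, hx, hbits⟩ := ih
    refine ⟨2 ^ m * (g m).toNat + x, ?_, fun i hi => ?_⟩
    · have : (g m).toNat ≤ 1 := Bool.toNat_le _
      rw [pow_succ]; nlinarith
    · rw [Nat.testBit_two_pow_mul_add _ hx]
      rcases Nat.lt_succ_iff_lt_or_eq.mp hi with hi | rfl
      · simp [hi, hbits i hi]
      · cases g i <;> simp

theorem Nat.exists_lt_two_pow_testBit_iff {m : ℕ} (p : Fin m → Prop) :
    ∃ x < 2 ^ m, ∀ i : Fin m, x.testBit i = true ↔ p i := by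
  classical
  obtain ⟨x, hx, hbits⟩ := exists_lt_two_pow_testBit_eq
    (fun i => if h : i < m then decide (p ⟨i, h⟩) else false) m
  exact ⟨x, hx, fun i => by simp [hbits i i.2]⟩

section PrimrecLemmas

variable {α : Type*} [Primcodable α]

theorem Primrec.nat_pow : Primrec₂ ((· ^ ·) : ℕ → ℕ → ℕ) :=
  Primrec₂.unpaired'.mp Nat.Primrec.pow

theorem PrimrecPred.forall_lt_of {f : α → ℕ} {p : α → ℕ → Prop} (hf : Primrec f)
    (hp : PrimrecRel p) : PrimrecPred fun a => ∀ x < f a, p a x :=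
  ((PrimrecRel.forall_mem_list (R := fun x a => p a x) hp.swap).comp
    (Primrec.list_range.comp hf) Primrec.id).of_eq fun _ => by simp

theorem PrimrecPred.exists_lt_of {f : α → ℕ} {p : α → ℕ → Prop} (hf : Primrec f)
    (hp : PrimrecRel p) : PrimrecPred fun a => ∃ x < f a, p a x :=
  ((PrimrecRel.exists_mem_list (R := fun x a => p a x) hp.swap).comp
    (Primrec.list_range.comp hf) Primrec.id).of_eq fun _ => by simp

theorem PrimrecPred.imp {p q : α → Prop} (hp : PrimrecPred p) (hq : PrimrecPred q) :
    PrimrecPred fun a => p a → q a :=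
  (hp.not.or hq).of_eq fun _ => imp_iff_not_or.symm

theorem PrimrecPred.iff {p q : α → Prop} (hp : PrimrecPred p) (hq : PrimrecPred q) :
    PrimrecPred fun a => (p a ↔ q a) :=
  ((hp.and hq).or (hp.not.and hq.not)).of_eq fun _ => by tauto

theorem PrimrecPred.testBit {f g : α → ℕ} (hf : Primrec f) (hg : Primrec g) :
    PrimrecPred fun a => (f a).testBit (g a) = true :=
  (Primrec.eq.comp (Primrec.nat_mod.comp (Primrec.nat_div.comp hf
    (Primrec.nat_pow.comp (Primrec.const 2) hg)) (Primrec.const 2)) (Primrec.const 1)).of_eq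
    fun _ => by rw [Nat.testBit_eq_decide_div_mod_eq, decide_eq_true_iff]

end PrimrecLemmas

namespace Formula

/-! ### Tautologies -/

/-- As in `IsPropTaut`, variables and `▷`-formulas are atoms for these valuations. -/
structure BoolVal where
  toFun : Formula → Bool
  map_bot : toFun bot = false
  map_imp : ∀ a b, toFun (imp a b) = (!toFun a || toFun b)

namespace BoolVal

instance : CoeFun BoolVal fun _ => Formula → Bool := ⟨toFun⟩

attribute [simp] map_bot map_imp

variable (v : BoolVal)

@[simp] theorem map_neg (a : Formula) : v (neg a) = !v a := by simp [neg]

@[simp] theorem map_top : v top = true := by simp [top]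

@[simp] theorem map_conj (a b : Formula) : v (conj a b) = (v a && v b) := by
  simp only [conj, map_neg, map_imp]; cases v a <;> cases v b <;> rfl

@[simp] theorem map_disj (a b : Formula) : v (disj a b) = (v a || v b) := by simp [disj]

@[simp] theorem map_simNeg (a : Formula) : v (simNeg a) = !v a := by
  rcases a with _ | _ | ⟨c, _ | _ | _ | _⟩ | _ <;> simp [simNeg]

@[simp] theorem map_conjList (l : List Formula) : v (conjList l) = l.all v := by
  induction l with
  | nil => simp [conjList]
  | cons a l ih => simp [conjList, ih]

@[simp] theorem map_bigConj (s : Finset Formula) :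
    v (bigConj s) = decide (∀ x ∈ s, v x = true) := by
  simp [bigConj, List.all_eq]

end BoolVal

theorem Prv.of_boolVal {d : Bool} {φ : Formula} (h : ∀ v : BoolVal, v φ = true) : Prv d φ :=
  Prv.taut fun v hb hi => h ⟨v, hb, hi⟩

theorem Prv.of_entails {d : Bool} {φ : Formula} (Γ : Finset Formula) (hΓ : ∀ x ∈ Γ, Prv d x)
    (h : ∀ v : BoolVal, (∀ x ∈ Γ, v x = true) → v φ = true) : Prv d φ := by
  induction Γ using Finset.induction_on generalizing φ with
  | empty => exact Prv.of_boolVal fun v => h v (by simp)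
  | insert a Γ _ ih =>
    refine (ih (φ := imp a φ) (fun x hx => hΓ x (by simp [hx])) fun v hv => ?_).mp
      (hΓ a (by simp))
    cases ha : v a <;> simp_all

theorem Prv.bigConj_imp {d : Bool} {s : Finset Formula} {ψ : Formula}
    (h : ∀ v : BoolVal, (∀ x ∈ s, v x = true) → v ψ = true) : Prv d (imp (bigConj s) ψ) :=
  Prv.of_boolVal fun v => by by_cases hv : ∀ x ∈ s, v x = true <;> simp_all

theorem Prv.weaken {d : Bool} {p q : Formula} (h : Prv d q) : Prv d (imp p q) :=
  Prv.of_entails {q} (by simpa using h) fun v hv => by simp_all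

theorem Prv.imp_self {d : Bool} (p : Formula) : Prv d (imp p p) :=
  Prv.of_boolVal fun v => by cases v p <;> simp_all

theorem Prv.imp_trans {d : Bool} {p q r : Formula} (h₁ : Prv d (imp p q)) (h₂ : Prv d (imp q r)) :
    Prv d (imp p r) :=
  Prv.of_entails {imp p q, imp q r} (by simp [h₁, h₂]) fun v hv => by
    cases hp : v p <;> cases hq : v q <;> simp_all

/-! ### Soundness for Kripke models -/

section Kripke

variable {W : Type*} {rel : W → W → W → Prop} {val : W → ℕ → Prop}

theorem Prv.forces {φ : Formula} (h : Prv false φ) (w : W) : Forces rel val w φ := by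
  classical
  generalize hd : false = d at h
  induction h generalizing w with
  | taut ht =>
    simpa using ht (fun χ => decide (Forces rel val w χ)) (decide_eq_false id)
      fun a b => by by_cases Forces rel val w a <;> simp_all [Forces]
  | a1 φ ψ χ =>
    intro hφ hχ u v huv hu
    by_cases h : Forces rel val u φ
    · exact hφ u v huv h
    · exact hχ u v huv (hu h)
  | a2 => intro u v _ hu; exact hu.elim
  | a3 => intro u v huv _; exact ⟨v, huv, id⟩
  | a4 => cases hd
  | mp _ _ ih₁ ih₂ => exact ih₁ w hd (ih₂ w hd)
  | mono _ _ ih₁ ih₂ =>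
    intro h u v huv hu
    obtain ⟨v', huv', hv'⟩ := h u v huv (ih₁ u hd hu)
    exact ⟨v', huv', ih₂ v' hd hv'⟩

theorem forces_congr_equiv {W' : Type*} {rel' : W' → W' → W' → Prop} {val' : W' → ℕ → Prop}
    (e : W ≃ W') (hrel : ∀ a b c, rel' (e a) (e b) (e c) ↔ rel a b c)
    (hval : ∀ a p, val' (e a) p ↔ val a p) (φ : Formula) (w : W) :
    Forces rel' val' (e w) φ ↔ Forces rel val w φ := by
  induction φ generalizing w with
  | var p => exact hval w p
  | bot => exact Iff.rfl
  | imp a b iha ihb => exact imp_congr (iha w) (ihb w)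
  | tri a b iha ihb =>
    simp only [Forces, e.surjective.forall, e.surjective.exists, hrel, iha, ihb]

end Kripke

/-! ### Subformulas and codes -/

theorem simNeg_cases (φ : Formula) :
    (∃ c, φ = imp c bot ∧ simNeg φ = c) ∨ simNeg φ = imp φ bot := by
  rcases φ with _ | _ | ⟨c, _ | _ | _ | _⟩ | _ <;> simp [simNeg, neg]

def subformulas : Formula → Finset Formula
  | var n => {var n}
  | bot => {bot}
  | imp a b => insert (imp a b) (subformulas a ∪ subformulas b)
  | tri a b => insert (tri a b) (subformulas a ∪ subformulas b)

theorem mem_subformulas_self (φ : Formula) : φ ∈ subformulas φ := by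
  cases φ <;> simp [subformulas]

theorem subformulas_subset {ψ φ : Formula} (h : ψ ∈ subformulas φ) :
    subformulas ψ ⊆ subformulas φ := by
  induction φ with
  | var | bot => simp only [subformulas, Finset.mem_singleton] at h; rw [h]
  | imp a b iha ihb | tri a b iha ihb =>
    simp only [subformulas, Finset.mem_insert, Finset.mem_union] at h
    rcases h with rfl | h | h
    · rfl
    · exact (iha h).trans fun x hx => by simp [subformulas, hx]
    · exact (ihb h).trans fun x hx => by simp [subformulas, hx]

def negClosure (φ : Formula) : Finset Formula :=
  insert bot (subformulas φ) ∪ (insert bot (subformulas φ)).image simNeg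

theorem mem_negClosure_self (φ : Formula) : φ ∈ negClosure φ := by
  simp [negClosure, mem_subformulas_self]

theorem subformulas_subset_insert_bot {χ φ : Formula} (h : χ ∈ insert bot (subformulas φ)) :
    subformulas χ ⊆ insert bot (subformulas φ) := by
  rcases Finset.mem_insert.mp h with rfl | h
  · simp [subformulas]
  · exact (subformulas_subset h).trans (Finset.subset_insert _ _)

theorem mem_insert_bot_of_simNeg_eq {χ c φ : Formula} (h : χ ∈ insert bot (subformulas φ))
    (hc : χ = imp c bot) : c ∈ insert bot (subformulas φ) :=
  subformulas_subset_insert_bot h (by simp [hc, subformulas, mem_subformulas_self])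

theorem subformulas_subset_negClosure {φ ψ : Formula} (h : ψ ∈ negClosure φ) :
    subformulas ψ ⊆ negClosure φ := by
  rcases Finset.mem_union.mp h with h | h
  · exact (subformulas_subset_insert_bot h).trans Finset.subset_union_left
  obtain ⟨χ, hχ, rfl⟩ := Finset.mem_image.mp h
  rcases simNeg_cases χ with ⟨c, rfl, hc⟩ | hc <;> rw [hc]
  · exact (subformulas_subset_insert_bot (mem_insert_bot_of_simNeg_eq hχ rfl)).trans
      Finset.subset_union_left
  · intro x hx
    simp only [subformulas, Finset.mem_insert, Finset.mem_union, Finset.mem_singleton] at hx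
    rcases hx with rfl | hx | rfl
    · exact Finset.mem_union_right _ (Finset.mem_image.mpr ⟨χ, hχ, hc⟩)
    · exact Finset.mem_union_left _ (subformulas_subset_insert_bot hχ hx)
    · exact Finset.mem_union_left _ (Finset.mem_insert_self _ _)

theorem subClosed_negClosure (φ : Formula) : SubClosed (negClosure φ) := by
  constructor <;> intro a b h <;>
    exact ⟨subformulas_subset_negClosure h (by simp [subformulas, mem_subformulas_self]),
      subformulas_subset_negClosure h (by simp [subformulas, mem_subformulas_self])⟩

theorem simClosed_negClosure (φ : Formula) : SimClosed (negClosure φ) := by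
  intro ψ h
  rcases Finset.mem_union.mp h with h | h
  · exact Finset.mem_union_right _ (Finset.mem_image_of_mem _ h)
  obtain ⟨χ, hχ, rfl⟩ := Finset.mem_image.mp h
  rcases simNeg_cases χ with ⟨c, rfl, hc⟩ | hc <;> rw [hc]
  · exact Finset.mem_union_right _
      (Finset.mem_image_of_mem _ (mem_insert_bot_of_simNeg_eq hχ rfl))
  · exact Finset.mem_union_left _ hχ

theorem enc_imp_mod (a b : Formula) : enc (imp a b) % 4 = 2 := by simp only [enc]; omega
theorem enc_tri_mod (a b : Formula) : enc (tri a b) % 4 = 3 := by simp only [enc]; omega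
theorem enc_imp_div (a b : Formula) : enc (imp a b) / 4 = Nat.pair (enc a) (enc b) := by
  simp only [enc]; omega
theorem enc_tri_div (a b : Formula) : enc (tri a b) / 4 = Nat.pair (enc a) (enc b) := by
  simp only [enc]; omega

theorem enc_lt_enc_imp (a b : Formula) : enc a < enc (imp a b) ∧ enc b < enc (imp a b) := by
  have := Nat.left_le_pair (enc a) (enc b); have := Nat.right_le_pair (enc a) (enc b)
  simp only [enc]; omega

theorem enc_lt_enc_tri (a b : Formula) : enc a < enc (tri a b) ∧ enc b < enc (tri a b) := by
  have := Nat.left_le_pair (enc a) (enc b); have := Nat.right_le_pair (enc a) (enc b)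
  simp only [enc]; omega

theorem unpair_div_four_lt {c : ℕ} (hc : c % 4 ≠ 0) :
    (c / 4).unpair.1 < c ∧ (c / 4).unpair.2 < c := by
  have := Nat.unpair_left_le (c / 4); have := Nat.unpair_right_le (c / 4)
  omega

/-- The inverse of `enc`, extended to all of `ℕ` by reading every residue mod 4 as a
connective; this makes the truth tables below well defined on arbitrary codes. -/
def decode (c : ℕ) : Formula :=
  if h₀ : c % 4 = 0 then var (c / 4)
  else if c % 4 = 1 then bot
  else if c % 4 = 2 then
    have := unpair_div_four_lt h₀
    imp (decode (c / 4).unpair.1) (decode (c / 4).unpair.2)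
  else
    have := unpair_div_four_lt h₀
    tri (decode (c / 4).unpair.1) (decode (c / 4).unpair.2)

theorem decode_of_mod_eq_one {c : ℕ} (h : c % 4 = 1) : decode c = bot := by
  rw [decode]; simp [h]

theorem decode_of_mod_eq_two {c : ℕ} (h : c % 4 = 2) :
    decode c = imp (decode (c / 4).unpair.1) (decode (c / 4).unpair.2) := by
  rw [decode]; simp [h]

theorem decode_of_mod_eq_three {c : ℕ} (h : c % 4 = 3) :
    decode c = tri (decode (c / 4).unpair.1) (decode (c / 4).unpair.2) := by
  rw [decode]; simp [h]

theorem decode_enc (φ : Formula) : decode (enc φ) = φ := by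
  induction φ with
  | var n => rw [decode]; simp [enc]
  | bot => exact decode_of_mod_eq_one rfl
  | imp a b iha ihb => rw [decode_of_mod_eq_two (enc_imp_mod a b), enc_imp_div]; simp [iha, ihb]
  | tri a b iha ihb => rw [decode_of_mod_eq_three (enc_tri_mod a b), enc_tri_div]; simp [iha, ihb]

theorem enc_injective : Function.Injective enc :=
  Function.LeftInverse.injective decode_enc

theorem enc_le_of_mem_subformulas {ψ φ : Formula} (h : ψ ∈ subformulas φ) : enc ψ ≤ enc φ := by
  induction φ with
  | var | bot => simp only [subformulas, Finset.mem_singleton] at h; rw [h]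
  | imp a b iha ihb =>
    simp only [subformulas, Finset.mem_insert, Finset.mem_union] at h
    have := enc_lt_enc_imp a b
    rcases h with rfl | h | h
    exacts [le_rfl, by have := iha h; omega, by have := ihb h; omega]
  | tri a b iha ihb =>
    simp only [subformulas, Finset.mem_insert, Finset.mem_union] at h
    have := enc_lt_enc_tri a b
    rcases h with rfl | h | h
    exacts [le_rfl, by have := iha h; omega, by have := ihb h; omega]

theorem card_negClosure_le (φ : Formula) : (negClosure φ).card ≤ 2 * enc φ + 4 := by
  have hsub : (subformulas φ).card ≤ enc φ + 1 := by
    simpa using Finset.card_le_card_of_injOn enc (t := Finset.range (enc φ + 1))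
      (fun ψ hψ => by simpa [Nat.lt_succ_iff] using enc_le_of_mem_subformulas hψ)
      enc_injective.injOn
  have := Finset.card_insert_le bot (subformulas φ)
  have := Finset.card_image_le (s := insert bot (subformulas φ)) (f := simNeg)
  have := Finset.card_union_le (insert bot (subformulas φ))
    ((insert bot (subformulas φ)).image simNeg)
  simp only [negClosure]; omega

/-! ### The canonical finite model -/

def disjList : List Formula → Formula
  | [] => bot
  | φ :: l => disj φ (disjList l)

noncomputable def disjConj (T : Finset (Finset Formula)) : Formula :=
  disjList (T.toList.map bigConj)

@[simp] theorem BoolVal.map_disjList (v : BoolVal) (l : List Formula) :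
    v (disjList l) = l.any v := by
  induction l with
  | nil => simp [disjList]
  | cons a l ih => simp [disjList, ih]

@[simp] theorem BoolVal.map_disjConj (v : BoolVal) (T : Finset (Finset Formula)) :
    v (disjConj T) = decide (∃ s ∈ T, ∀ x ∈ s, v x = true) := by
  simp [disjConj, List.any_eq]

theorem disjConj_empty : disjConj ∅ = bot := by simp [disjConj, disjList]

theorem Prv.imp_tri_disjList {d : Bool} {X b : Formula} {l : List Formula}
    (h : ∀ x ∈ l, Prv d (imp X (tri x b))) : Prv d (imp X (tri (disjList l) b)) := by
  induction l with
  | nil => exact (Prv.a2 b).weaken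
  | cons a l ih =>
    have hl := ih fun x hx => h x (List.mem_cons_of_mem a hx)
    refine Prv.of_entails {imp (tri a b) (imp (tri (disjList l) b) (tri (disjList (a :: l)) b)),
      imp X (tri a b), imp X (tri (disjList l) b)}
      (by simpa [disjList, h a List.mem_cons_self, hl] using Prv.a1 (d := d) a b (disjList l))
      fun v hv => ?_
    simp only [Finset.mem_insert, Finset.mem_singleton, forall_eq_or_imp, forall_eq,
      BoolVal.map_imp, Bool.or_eq_true, Bool.not_eq_true', Bool.eq_false_iff] at hv ⊢
    tauto

open Classical in
/-- The maximal consistent subsets of `Φ` (cf. `MaxCons`), consistency of a finite set `s`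
being `⊬ ⋀s → ⊥`. -/
noncomputable def atoms (Φ : Finset Formula) : Finset (Finset Formula) :=
  Φ.powerset.filter fun s =>
    (∀ φ ∈ Φ, φ ∈ s ∨ simNeg φ ∈ s) ∧ ¬ Prv false (imp (bigConj s) bot)

section Atoms

variable {Φ s : Finset Formula}

theorem mem_atoms : s ∈ atoms Φ ↔
    s ⊆ Φ ∧ (∀ φ ∈ Φ, φ ∈ s ∨ simNeg φ ∈ s) ∧ ¬ Prv false (imp (bigConj s) bot) := by
  simp [atoms]

theorem prv_imp_iff_mem (hs : s ∈ atoms Φ) {ψ : Formula} (hψ : ψ ∈ Φ) :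
    Prv false (imp (bigConj s) ψ) ↔ ψ ∈ s := by
  obtain ⟨-, hfull, hcons⟩ := mem_atoms.mp hs
  refine ⟨fun h => ?_, fun h => Prv.bigConj_imp fun _ hv => hv ψ h⟩
  refine (hfull ψ hψ).resolve_right fun hneg => hcons ?_
  refine Prv.of_entails {imp (bigConj s) ψ} (by simpa using h) fun v hv => ?_
  have := v.map_simNeg ψ
  by_cases hv' : ∀ x ∈ s, v x = true <;> simp_all

theorem bot_not_mem (hs : s ∈ atoms Φ) : bot ∉ s := fun h =>
  (mem_atoms.mp hs).2.2 (Prv.bigConj_imp fun _ hv => hv bot h)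

theorem mem_of_entails (hs : s ∈ atoms Φ) {ψ : Formula} (hψ : ψ ∈ Φ)
    (h : ∀ v : BoolVal, (∀ x ∈ s, v x = true) → v ψ = true) : ψ ∈ s :=
  (prv_imp_iff_mem hs hψ).mp (Prv.bigConj_imp h)

theorem simNeg_mem_of_not_mem (hs : s ∈ atoms Φ) {ψ : Formula} (hψ : ψ ∈ Φ) (h : ψ ∉ s) :
    simNeg ψ ∈ s :=
  ((mem_atoms.mp hs).2.1 ψ hψ).resolve_left h

theorem imp_mem_iff (hs : s ∈ atoms Φ) {a b : Formula} (hΦ : SubClosed Φ) (h : imp a b ∈ Φ) :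
    imp a b ∈ s ↔ (a ∈ s → b ∈ s) := by
  obtain ⟨ha, hb⟩ := hΦ.1 a b h
  refine ⟨fun hab has => mem_of_entails hs hb fun v hv => ?_, fun hab => ?_⟩
  · simpa [hv a has] using hv _ hab
  refine mem_of_entails hs h fun v hv => ?_
  by_cases has : a ∈ s
  · simp [hv b (hab has)]
  · have := hv _ (simNeg_mem_of_not_mem hs ha has)
    simp_all

/-- Every valuation satisfies the conjunction of some full subset of `Φ`, and the inconsistent
ones prove everything. -/
theorem prv_of_forall_atoms (hΦ : SimClosed Φ) {Y : Formula}
    (h : ∀ s ∈ atoms Φ, Prv false (imp (bigConj s) Y)) : Prv false Y := by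
  let full := Φ.powerset.filter fun s => ∀ φ ∈ Φ, φ ∈ s ∨ simNeg φ ∈ s
  refine Prv.of_entails (full.image fun s => imp (bigConj s) Y) ?_ fun v hv => ?_
  · simp only [Finset.mem_image, forall_exists_index, and_imp, forall_apply_eq_imp_iff₂]
    intro s hs
    by_cases hcons : Prv false (imp (bigConj s) bot)
    · exact Prv.of_entails {imp (bigConj s) bot} (by simpa using hcons) fun v hv => by
        by_cases v (bigConj s) <;> simp_all
    · exact h s (mem_atoms.mpr ⟨(Finset.mem_filter.mp hs).1 |> Finset.mem_powerset.mp,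
        (Finset.mem_filter.mp hs).2, hcons⟩)
  · let s := Φ.filter fun φ => v φ = true
    have hs : s ∈ full := by
      refine Finset.mem_filter.mpr ⟨Finset.mem_powerset.mpr (Finset.filter_subset _ _), ?_⟩
      intro φ hφ
      by_cases hvφ : v φ = true
      · exact .inl (Finset.mem_filter.mpr ⟨hφ, hvφ⟩)
      · exact .inr (Finset.mem_filter.mpr ⟨hΦ φ hφ, by simpa using hvφ⟩)
    have := hv _ (Finset.mem_image_of_mem _ hs)
    simp_all [s]

theorem prv_imp_disjConj_atoms_mem (hΦ : SimClosed Φ) {a : Formula} (ha : a ∈ Φ) :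
    Prv false (imp a (disjConj ((atoms Φ).filter (a ∈ ·)))) := by
  refine prv_of_forall_atoms hΦ fun s hs => Prv.bigConj_imp fun v hv => ?_
  by_cases has : a ∈ s
  · simpa using .inr ⟨s, ⟨hs, has⟩, hv⟩
  · have := hv _ (simNeg_mem_of_not_mem hs ha has)
    simp_all

theorem prv_neg_disjConj_atoms_not_mem_imp (hΦ : SimClosed Φ) (b : Formula) :
    Prv false (imp (neg (disjConj ((atoms Φ).filter (b ∉ ·)))) b) := by
  refine prv_of_forall_atoms hΦ fun s hs => Prv.bigConj_imp fun v hv => ?_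
  by_cases hbs : b ∈ s
  · simp [hv b hbs]
  · simpa using .inl ⟨s, ⟨hs, hbs⟩, hv⟩

theorem prv_imp_neg_disjConj {T : Finset (Finset Formula)} (hT : T ⊆ atoms Φ) {b : Formula}
    (hb : b ∈ Φ) (h : ∀ s ∈ T, b ∉ s) : Prv false (imp b (neg (disjConj T))) := by
  refine Prv.of_boolVal fun v => ?_
  cases hvb : v b
  · simp [hvb]
  · have hT' : ∀ s ∈ T, ¬ ∀ x ∈ s, v x = true := fun s hs hv => by
      simpa [hvb] using hv _ (simNeg_mem_of_not_mem (hT hs) hb (h s hs))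
    simpa [hvb] using hT'

end Atoms

/-- A world `(s, T)` carries the atom `s`; `T` is the set of atoms allowed for the outputs on
input `(s, T)`. -/
noncomputable def worlds (Φ : Finset Formula) :
    Finset (Finset Formula × Finset (Finset Formula)) :=
  atoms Φ ×ˢ (atoms Φ).powerset

section Canonical

variable {Φ : Finset Formula}

theorem mk_mem_worlds {s : Finset Formula} {T : Finset (Finset Formula)} (hs : s ∈ atoms Φ)
    (hT : T ⊆ atoms Φ) : (s, T) ∈ worlds Φ :=
  Finset.mem_product.mpr ⟨hs, Finset.mem_powerset.mpr hT⟩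

theorem fst_mem_atoms (x : worlds Φ) : x.1.1 ∈ atoms Φ := (Finset.mem_product.mp x.2).1

theorem snd_subset_atoms (x : worlds Φ) : x.1.2 ⊆ atoms Φ :=
  Finset.mem_powerset.mp (Finset.mem_product.mp x.2).2

variable (Φ) in
/-- `u →_x v`: `x` is consistent with sending `u` into the atoms `T` attached to `u`, and `v`'s
atom is one of them. -/
def canRel (x u v : worlds Φ) : Prop :=
  v.1.1 ∈ u.1.2 ∧
    ¬ Prv false (imp (bigConj x.1.1) (tri (bigConj u.1.1) (neg (disjConj u.1.2))))

variable (Φ) in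
def canVal (x : worlds Φ) (p : ℕ) : Prop := var p ∈ x.1.1

theorem forces_tri_of_mem {a b : Formula} (hΦ : SubClosed Φ) (hab : tri a b ∈ Φ)
    (iha : ∀ x, Forces (canRel Φ) (canVal Φ) x a ↔ a ∈ x.1.1)
    (ihb : ∀ x, Forces (canRel Φ) (canVal Φ) x b ↔ b ∈ x.1.1)
    (x : worlds Φ) (h : tri a b ∈ x.1.1) : Forces (canRel Φ) (canVal Φ) x (tri a b) := by
  obtain ⟨ha, hb⟩ := hΦ.2 a b hab
  intro u v ⟨_, hxu⟩ hua
  obtain ⟨v', hv', hbv'⟩ : ∃ v' ∈ u.1.2, b ∈ v' := by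
    by_contra! hno
    refine hxu (((prv_imp_iff_mem (fst_mem_atoms x) hab).mpr h).imp_trans (Prv.mono ?_ ?_))
    · exact (prv_imp_iff_mem (fst_mem_atoms u) ha).mpr ((iha u).mp hua)
    · exact prv_imp_neg_disjConj (snd_subset_atoms u) hb hno
  let w : worlds Φ := ⟨(v', ∅), mk_mem_worlds (snd_subset_atoms u hv') (Finset.empty_subset _)⟩
  exact ⟨w, ⟨hv', hxu⟩, (ihb w).mpr hbv'⟩

theorem mem_of_forces_tri {a b : Formula} (hΦ : SubClosed Φ) (hΦ' : SimClosed Φ)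
    (hab : tri a b ∈ Φ)
    (iha : ∀ x, Forces (canRel Φ) (canVal Φ) x a ↔ a ∈ x.1.1)
    (ihb : ∀ x, Forces (canRel Φ) (canVal Φ) x b ↔ b ∈ x.1.1)
    (x : worlds Φ) (h : Forces (canRel Φ) (canVal Φ) x (tri a b)) : tri a b ∈ x.1.1 := by
  obtain ⟨ha, -⟩ := hΦ.2 a b hab
  by_contra hn
  have hn' := mt (prv_imp_iff_mem (fst_mem_atoms x) hab).mp hn
  -- Some atom `u ∋ a` is not forced by `x` into `b`: otherwise A1 and M give `⋀x ⊢ a ▷ b`.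
  obtain ⟨u, hu, hau, hxu⟩ : ∃ u ∈ atoms Φ, a ∈ u ∧
      ¬ Prv false (imp (bigConj x.1.1) (tri (bigConj u) b)) := by
    by_contra! hall
    refine hn' ((Prv.imp_tri_disjList fun y hy => ?_).imp_trans
      (Prv.mono (prv_imp_disjConj_atoms_mem hΦ' ha) (Prv.imp_self b)))
    obtain ⟨u, hu, rfl⟩ := List.mem_map.mp hy
    obtain ⟨hu, hau⟩ := Finset.mem_filter.mp (Finset.mem_toList.mp hu)
    exact hall u hu hau
  let T := (atoms Φ).filter (b ∉ ·)
  have hxuT : ¬ Prv false (imp (bigConj x.1.1) (tri (bigConj u) (neg (disjConj T)))) :=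
    fun hP => hxu (hP.imp_trans
      (Prv.mono (Prv.imp_self _) (prv_neg_disjConj_atoms_not_mem_imp hΦ' b)))
  obtain ⟨v, hv⟩ : T.Nonempty := by
    refine Finset.nonempty_iff_ne_empty.mpr fun hT => hxuT ?_
    rw [hT, disjConj_empty]
    exact (Prv.a3 _).weaken
  let u' : worlds Φ := ⟨(u, T), mk_mem_worlds hu (Finset.filter_subset _ _)⟩
  let v' : worlds Φ :=
    ⟨(v, ∅), mk_mem_worlds (Finset.filter_subset _ _ hv) (Finset.empty_subset _)⟩
  obtain ⟨w, ⟨hw, -⟩, hbw⟩ := h u' v' ⟨hv, hxuT⟩ ((iha u').mpr hau)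
  exact (Finset.mem_filter.mp hw).2 ((ihb w).mp hbw)

theorem forces_canonical_iff (hΦ : SubClosed Φ) (hΦ' : SimClosed Φ) {ψ : Formula} (hψ : ψ ∈ Φ)
    (x : worlds Φ) : Forces (canRel Φ) (canVal Φ) x ψ ↔ ψ ∈ x.1.1 := by
  induction ψ generalizing x with
  | var p => exact Iff.rfl
  | bot => exact ⟨False.elim, bot_not_mem (fst_mem_atoms x)⟩
  | imp a b iha ihb =>
    obtain ⟨ha, hb⟩ := hΦ.1 a b hψ
    rw [imp_mem_iff (fst_mem_atoms x) hΦ hψ]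
    exact imp_congr (iha ha x) (ihb hb x)
  | tri a b iha ihb =>
    obtain ⟨ha, hb⟩ := hΦ.2 a b hψ
    exact ⟨mem_of_forces_tri hΦ hΦ' hψ (iha ha) (ihb hb) x,
      forces_tri_of_mem hΦ hψ (iha ha) (ihb hb) x⟩

theorem exists_not_forces_canonical (hΦ : SubClosed Φ) (hΦ' : SimClosed Φ) {φ : Formula}
    (hφ : φ ∈ Φ) (h : ¬ Prv false φ) : ∃ x : worlds Φ, ¬ Forces (canRel Φ) (canVal Φ) x φ := by
  obtain ⟨s, hs, hφs⟩ : ∃ s ∈ atoms Φ, φ ∉ s := by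
    by_contra! hall
    exact h (prv_of_forall_atoms hΦ' fun s hs => (prv_imp_iff_mem hs hφ).mpr (hall s hs))
  refine ⟨⟨(s, ∅), mk_mem_worlds hs (Finset.empty_subset _)⟩, fun hf => hφs ?_⟩
  exact (forces_canonical_iff hΦ hΦ' hφ _).mp hf

theorem card_worlds_le (Φ : Finset Formula) : (worlds Φ).card ≤ 2 ^ 2 ^ (Φ.card + 1) := by
  have hatoms : (atoms Φ).card ≤ 2 ^ Φ.card :=
    (Finset.card_le_card fun s hs => Finset.mem_powerset.mpr (mem_atoms.mp hs).1).trans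
      (Finset.card_powerset Φ).le
  calc (worlds Φ).card = (atoms Φ).card * 2 ^ (atoms Φ).card := by
        rw [worlds, Finset.card_product, Finset.card_powerset]
    _ ≤ 2 ^ (atoms Φ).card * 2 ^ (atoms Φ).card :=
        Nat.mul_le_mul_right _ Nat.lt_two_pow_self.le
    _ = 2 ^ (2 * (atoms Φ).card) := by rw [← pow_add, two_mul]
    _ ≤ 2 ^ 2 ^ (Φ.card + 1) := Nat.pow_le_pow_right two_pos (by rw [pow_succ]; omega)

end Canonical

/-- From `card_negClosure_le` and `card_worlds_le`. -/
def modelBound (n : ℕ) : ℕ := 2 ^ 2 ^ (2 * n + 5)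

theorem exists_fin_countermodel {φ : Formula} (h : ¬ Prv false φ) :
    ∃ k ≤ modelBound (enc φ), ∃ (rel : Fin k → Fin k → Fin k → Prop) (val : Fin k → ℕ → Prop)
      (w : Fin k), ¬ Forces rel val w φ := by
  obtain ⟨x, hx⟩ := exists_not_forces_canonical (subClosed_negClosure φ)
    (simClosed_negClosure φ) (mem_negClosure_self φ) h
  let e := (worlds (negClosure φ)).equivFin
  refine ⟨_, ?_, fun a b c => canRel _ (e.symm a) (e.symm b) (e.symm c),
    fun a => canVal _ (e.symm a), e x, ?_⟩
  · have := card_negClosure_le φ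
    exact (card_worlds_le _).trans
      (Nat.pow_le_pow_right two_pos (Nat.pow_le_pow_right two_pos (by omega)))
  · rwa [forces_congr_equiv (rel := canRel _) (val := canVal _) e
      (fun _ _ _ => by simp only [Equiv.symm_apply_apply]) (fun _ _ => by rw [e.symm_apply_apply])]

/-! ### Models and truth tables as numbers -/

def codeRel (k r : ℕ) (w u v : Fin k) : Prop := r.testBit (v + k * (u + k * w)) = true

theorem exists_codeRel_eq {k : ℕ} (rel : Fin k → Fin k → Fin k → Prop) :
    ∃ r < 2 ^ (k * k * k), codeRel k r = rel := by
  obtain ⟨r, hr, hbits⟩ := Nat.exists_lt_two_pow_testBit_iff fun i : Fin (k * k * k) =>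
    let p := finProdFinEquiv.symm i
    rel (finProdFinEquiv.symm p.1).1 (finProdFinEquiv.symm p.1).2 p.2
  refine ⟨r, hr, funext₃ fun w u v => propext ?_⟩
  simpa [codeRel] using hbits (finProdFinEquiv (finProdFinEquiv (w, u), v))

/-- The clause for `a ▷ b` at world `w`, read off a relation code `r` and a truth table `L`
whose bit `w + k * c` tells whether world `w` forces the formula coded by `c`. -/
def TriHolds (k r L a b w : ℕ) : Prop :=
  ∀ u < k, ∀ v < k, r.testBit (v + k * (u + k * w)) = true → L.testBit (u + k * a) = true →
    ∃ v' < k, r.testBit (v' + k * (u + k * w)) = true ∧ L.testBit (v' + k * b) = true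

/-- Codes `4 * p` of variables are left unconstrained: that part of `L` is the valuation. -/
def ClauseHolds (k r L c w : ℕ) : Prop :=
  (c % 4 = 1 → L.testBit (w + k * c) = false) ∧
  (c % 4 = 2 → (L.testBit (w + k * c) = true ↔
    (L.testBit (w + k * (c / 4).unpair.1) = true →
      L.testBit (w + k * (c / 4).unpair.2) = true))) ∧
  (c % 4 = 3 → (L.testBit (w + k * c) = true ↔
    TriHolds k r L (c / 4).unpair.1 (c / 4).unpair.2 w))

def IsTruthTable (k r L n : ℕ) : Prop := ∀ c < n + 1, ∀ w < k, ClauseHolds k r L c w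

/-- The formula coded by `n` is forced everywhere in every model with at most `modelBound n`
worlds, a model being given by its relation code `r` and its truth table `L`. -/
def ValidInSmallModels (n : ℕ) : Prop :=
  ∀ k < modelBound n + 1, ∀ r < 2 ^ (k * k * k), ∀ L < 2 ^ ((n + 1) * k),
    IsTruthTable k r L n → ∀ w < k, L.testBit (w + k * n) = true

theorem triHolds_iff {k r L a b w : ℕ} (hw : w < k) :
    TriHolds k r L a b w ↔ ∀ u v : Fin k, codeRel k r ⟨w, hw⟩ u v →
      L.testBit (u + k * a) = true →
        ∃ v' : Fin k, codeRel k r ⟨w, hw⟩ u v' ∧ L.testBit (v' + k * b) = true := by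
  simp only [TriHolds, codeRel, Fin.forall_iff, Fin.exists_iff, exists_prop]

theorem IsTruthTable.testBit_iff_forces {k r L n : ℕ} (hL : IsTruthTable k r L n) {ψ : Formula}
    (hψ : enc ψ ≤ n) (w : Fin k) :
    L.testBit (w + k * enc ψ) = true ↔
      Forces (codeRel k r) (fun w p => L.testBit (w + k * enc (var p)) = true) w ψ := by
  induction ψ generalizing w with
  | var p => exact Iff.rfl
  | bot =>
    have := (hL (enc bot) (by omega) w w.2).1 rfl
    simp [Forces, this]
  | imp a b iha ihb =>
    have := enc_lt_enc_imp a b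
    have hc := (hL _ (by omega) w w.2).2.1 (enc_imp_mod a b)
    rw [enc_imp_div, Nat.unpair_pair] at hc
    rw [hc, iha (by omega), ihb (by omega)]
    rfl
  | tri a b iha ihb =>
    have := enc_lt_enc_tri a b
    have hc := (hL _ (by omega) w w.2).2.2 (enc_tri_mod a b)
    rw [enc_tri_div, Nat.unpair_pair] at hc
    rw [hc, triHolds_iff w.2]
    simp only [Fin.eta, iha (by omega), ihb (by omega)]
    rfl

theorem isTruthTable_of_forces {k r L n : ℕ} {val : Fin k → ℕ → Prop}
    (hL : ∀ c < n + 1, ∀ w (hw : w < k),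
      L.testBit (w + k * c) = true ↔ Forces (codeRel k r) val ⟨w, hw⟩ (decode c)) :
    IsTruthTable k r L n := by
  intro c hc w hw
  have := unpair_div_four_lt (c := c)
  refine ⟨fun h => ?_, fun h => ?_, fun h => ?_⟩
  · simpa [decode_of_mod_eq_one h, Forces] using hL c hc w hw
  · rw [hL c hc w hw, decode_of_mod_eq_two h, hL _ (by omega) w hw, hL _ (by omega) w hw]
    rfl
  · rw [hL c hc w hw, decode_of_mod_eq_three h, triHolds_iff hw]
    simp only [Forces, hL _ (by omega : (c / 4).unpair.1 < n + 1), Fin.is_lt, Fin.eta,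
      hL _ (by omega : (c / 4).unpair.2 < n + 1)]

theorem validInSmallModels_of_prv {φ : Formula} (h : Prv false φ) :
    ValidInSmallModels (enc φ) := fun _ _ _ _ _ _ hL w hw =>
  (hL.testBit_iff_forces le_rfl ⟨w, hw⟩).mpr (h.forces _)

theorem prv_of_validInSmallModels {φ : Formula} (h : ValidInSmallModels (enc φ)) :
    Prv false φ := by
  by_contra hφ
  obtain ⟨k, hk, rel, val, w, hw⟩ := exists_fin_countermodel hφ
  obtain ⟨r, hr, rfl⟩ := exists_codeRel_eq rel
  obtain ⟨L, hL, hbits⟩ := Nat.exists_lt_two_pow_testBit_iff fun i : Fin ((enc φ + 1) * k) =>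
    Forces (codeRel k r) val (finProdFinEquiv.symm i).2 (decode (finProdFinEquiv.symm i).1)
  have hL' : ∀ c < enc φ + 1, ∀ w (hw : w < k),
      L.testBit (w + k * c) = true ↔ Forces (codeRel k r) val ⟨w, hw⟩ (decode c) :=
    fun c hc w hw => by simpa using hbits (finProdFinEquiv (⟨c, hc⟩, ⟨w, hw⟩))
  refine hw ?_
  simpa [decode_enc] using (hL' _ (Nat.lt_succ_self _) w w.2).mp
    (h k (Nat.lt_succ_of_le hk) r hr L hL (isTruthTable_of_forces hL') w w.2)

/-! ### Primitive recursiveness -/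

section Primrec

open Primrec

variable {α : Type*} [Primcodable α] {k r L : α → ℕ}

theorem primrecPred_triHolds {a b w : α → ℕ} (hk : Primrec k) (hr : Primrec r) (hL : Primrec L)
    (ha : Primrec a) (hb : Primrec b) (hw : Primrec w) :
    PrimrecPred fun x => TriHolds (k x) (r x) (L x) (a x) (b x) (w x) := by
  have k₁ := hk.comp (fst (β := ℕ))
  have k₂ := k₁.comp (fst (β := ℕ))
  have k₃ := k₂.comp (fst (β := ℕ))
  -- index of the pair `(w, u)`, as seen from inside the quantifiers over `v` and `v'`
  have wu₂ : Primrec fun q : (α × ℕ) × ℕ => q.1.2 + k q.1.1 * w q.1.1 :=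
    nat_add.comp (snd.comp fst) (nat_mul.comp k₂ (hw.comp (fst.comp fst)))
  have wu₃ := wu₂.comp (fst (β := ℕ))
  refine .forall_lt_of hk (.forall_lt_of k₁ (.imp ?_ (.imp ?_ (.exists_lt_of k₂ (.and ?_ ?_)))))
  · exact .testBit (hr.comp (fst.comp fst)) (nat_add.comp snd (nat_mul.comp k₂ wu₂))
  · exact .testBit (hL.comp (fst.comp fst)) (nat_add.comp (snd.comp fst)
      (nat_mul.comp k₂ (ha.comp (fst.comp fst))))
  · exact .testBit (hr.comp (fst.comp (fst.comp fst))) (nat_add.comp snd (nat_mul.comp k₃ wu₃))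
  · exact .testBit (hL.comp (fst.comp (fst.comp fst))) (nat_add.comp snd
      (nat_mul.comp k₃ (hb.comp (fst.comp (fst.comp fst)))))

theorem primrecPred_clauseHolds {c w : α → ℕ} (hk : Primrec k) (hr : Primrec r)
    (hL : Primrec L) (hc : Primrec c) (hw : Primrec w) :
    PrimrecPred fun x => ClauseHolds (k x) (r x) (L x) (c x) (w x) := by
  have hmod (i : ℕ) : PrimrecPred fun x => c x % 4 = i :=
    Primrec.eq.comp (nat_mod.comp hc (const 4)) (const i)
  have hquot := unpair.comp (nat_div.comp hc (const 4))
  have bit {i : α → ℕ} (hi : Primrec i) : PrimrecPred fun x => (L x).testBit (w x + k x * i x) :=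
    .testBit hL (nat_add.comp hw (nat_mul.comp hk hi))
  refine .and (.imp (hmod 1) ((bit hc).not.of_eq fun _ => by simp)) (.and ?_ ?_)
  · exact .imp (hmod 2) (.iff (bit hc) (.imp (bit (fst.comp hquot)) (bit (snd.comp hquot))))
  · exact .imp (hmod 3) (.iff (bit hc)
      (primrecPred_triHolds hk hr hL (fst.comp hquot) (snd.comp hquot) hw))

theorem primrecPred_isTruthTable {n : α → ℕ} (hk : Primrec k) (hr : Primrec r) (hL : Primrec L)
    (hn : Primrec n) : PrimrecPred fun x => IsTruthTable (k x) (r x) (L x) (n x) :=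
  .forall_lt_of (succ.comp hn) (.forall_lt_of (hk.comp fst)
    (primrecPred_clauseHolds (hk.comp (fst.comp fst)) (hr.comp (fst.comp fst))
      (hL.comp (fst.comp fst)) (snd.comp fst) snd))

theorem primrec_modelBound : Primrec modelBound :=
  nat_pow.comp (const 2) (nat_pow.comp (const 2)
    (nat_add.comp (nat_mul.comp (const 2) Primrec.id) (const 5)))

theorem primrecPred_validInSmallModels : PrimrecPred ValidInSmallModels := by
  -- the context grows as `n`, `(n, k)`, `((n, k), r)`, `(((n, k), r), L)`
  have n₂ : Primrec fun q : (ℕ × ℕ) × ℕ => q.1.1 := fst.comp fst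
  have k₂ : Primrec fun q : (ℕ × ℕ) × ℕ => q.1.2 := snd.comp fst
  have n₃ := n₂.comp (fst (β := ℕ))
  have k₃ := k₂.comp (fst (β := ℕ))
  refine .forall_lt_of (succ.comp primrec_modelBound) (.forall_lt_of ?_ (.forall_lt_of ?_ ?_))
  · exact nat_pow.comp (const 2) (nat_mul.comp (nat_mul.comp snd snd) snd)
  · exact nat_pow.comp (const 2) (nat_mul.comp (succ.comp n₂) k₂)
  · refine .imp (primrecPred_isTruthTable k₃ (snd.comp fst) snd n₃) (.forall_lt_of k₃ ?_)
    exact .testBit (snd.comp fst) (nat_add.comp snd (nat_mul.comp (k₃.comp fst) (n₃.comp fst)))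

end Primrec

end Formula

open Formula in
/-- Decidability of ℜ: there is a computable function (with respect to the
canonical encoding `Formula.enc` of formulas as natural numbers) deciding
theoremhood in ℜ. -/
theorem decidable_R :
    ∃ f : ℕ → Bool, Computable f ∧
      ∀ φ : Formula, (f (enc φ) = true ↔ Prv false φ) := by
  obtain ⟨_, h⟩ := primrecPred_validInSmallModels
  exact ⟨fun n => decide (ValidInSmallModels n), h.to_comp, fun φ =>
    decide_eq_true_iff.trans ⟨prv_of_validInSmallModels, validInSmallModels_of_prv⟩⟩
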